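/- arXiv:2307.16175 — 15 statements merged into one kernel-verified Lean document; each statement's English description precedes it below -/
import Mathlib

section
/- Let {N_i : i ∈ I} be a directed family of φ-δ-S-primary submodules of M, all associated to the same s ∈ S, and suppose δ((⋃ N_i) :_R M) ∩ S = ∅. Then N = ⋃_{i∈I} N_i is a φ-δ-S-primary submodule of M associated to s. -/
open Submodule

variable {R : Type*} [CommRing R] {M : Type*} [AddCommGroup M] [Module R M]

/-- `N` is a `φ`-`δ`-`S`-primary submodule of `M` associated to `s ∈ S`. -/
def IsPhiDeltaSPrimary (δ : Ideal R → Ideal R) (φ : Submodule R M → Submodule R M)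
    (S : Set R) (s : R) (N : Submodule R M) : Prop :=
  N ≠ ⊤ ∧ ((δ (N.colon ⊤) : Set R) ∩ S = ∅) ∧ s ∈ S ∧
    ∀ (a : R) (m : M), a • m ∈ N → a • m ∉ φ N → s • m ∈ N ∨ s * a ∈ δ (N.colon ⊤)

theorem stmt1 (δ : Ideal R → Ideal R) (φ : Submodule R M → Submodule R M)
    (S : Set R) (hS1 : (1 : R) ∈ S) (hSmul : ∀ a ∈ S, ∀ b ∈ S, a * b ∈ S)
    (hδ1 : ∀ I : Ideal R, I ≤ δ I) (hδ2 : ∀ I J : Ideal R, I ≤ J → δ I ≤ δ J)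
    (hφ1 : ∀ P : Submodule R M, φ P ≤ P)
    (hφ2 : ∀ P Q : Submodule R M, P ≤ Q → φ P ≤ φ Q)
    {ι : Type*} [Nonempty ι] (N : ι → Submodule R M)
    (hdir : Directed (· ≤ ·) N) (s : R)
    (hprim : ∀ i, IsPhiDeltaSPrimary δ φ S s (N i))
    (hdisj : ((δ ((⨆ i, N i).colon ⊤) : Set R) ∩ S = ∅)) :
    IsPhiDeltaSPrimary δ φ S s (⨆ i, N i) := by
  have hcolon : ∀ i, (N i).colon ⊤ ≤ (⨆ i, N i).colon ⊤ := by
    intro i r hr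
    rw [Submodule.mem_colon] at hr ⊢
    exact fun p hp => le_iSup N i (hr p hp)
  refine ⟨?_, hdisj, (hprim (Classical.arbitrary ι)).2.2.1, ?_⟩
  · intro htop
    have h1 : (1 : R) ∈ δ ((⨆ i, N i).colon ⊤) := by
      apply hδ1
      rw [Submodule.mem_colon]
      intro p _
      rw [htop]; trivial
    exact Set.eq_empty_iff_forall_notMem.mp hdisj 1 ⟨h1, hS1⟩
  · intro a m ham hnotphi
    obtain ⟨i, hi⟩ := (Submodule.mem_iSup_of_directed N hdir).mp ham
    have hnphi : a • m ∉ φ (N i) := fun h => hnotphi (hφ2 _ _ (le_iSup N i) h)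
    rcases (hprim i).2.2.2 a m hi hnphi with h | h
    · exact Or.inl (le_iSup N i h)
    · exact Or.inr (hδ2 _ _ (hcolon i) h)
end

section
/- Suppose φ and δ have the intersection property (φ(N∩K)=φ(N)∩φ(K), δ(I∩J)=δ(I)∩δ(J)). Let N_1,…,N_r be φ-δ-S-primary submodules of M all associated to the same s ∈ S, with φ(N_i)=φ(N_j) and δ(N_i:_R M)=δ(N_j:_R M) for all i,j. Then N = ⋂_{i=1}^r N_i is a φ-δ-S-primary submodule of M associated to s. -/
open Submodule

variable {R : Type*} [CommRing R] {M : Type*} [AddCommGroup M] [Module R M]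

private lemma aux_inf {α : Type*} [CompleteLattice α] (f : α → α)
    (hf : ∀ a b, f (a ⊓ b) = f a ⊓ f b) :
    ∀ n (g : Fin (n + 1) → α), f (⨅ i, g i) = ⨅ i, f (g i) := by
  intro n
  induction n with
  | zero =>
    intro g
    have e : ∀ h : Fin (0 + 1) → α, (⨅ i, h i) = h 0 := fun h =>
      le_antisymm (iInf_le _ _) (le_iInf fun i => by rw [Fin.fin_one_eq_zero i])
    rw [e g, e (fun i => f (g i))]
  | succ n ih =>
    intro g
    have split : ∀ h : Fin (n + 2) → α, (⨅ i, h i) = h 0 ⊓ ⨅ i : Fin (n + 1), h i.succ := by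
      intro h
      apply le_antisymm
      · exact le_inf (iInf_le _ _) (le_iInf fun i => iInf_le _ _)
      · apply le_iInf
        intro i
        cases i using Fin.cases with
        | zero => exact inf_le_left
        | succ j => exact inf_le_right.trans (iInf_le _ j)
    rw [split g, hf, ih (fun i => g i.succ), split (fun i => f (g i))]

theorem stmt2 (δ : Ideal R → Ideal R) (φ : Submodule R M → Submodule R M)
    (S : Set R) (hS1 : (1 : R) ∈ S) (hSmul : ∀ a ∈ S, ∀ b ∈ S, a * b ∈ S)
    (hδ1 : ∀ I : Ideal R, I ≤ δ I) (hδ2 : ∀ I J : Ideal R, I ≤ J → δ I ≤ δ J)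
    (hφ1 : ∀ P : Submodule R M, φ P ≤ P)
    (hφ2 : ∀ P Q : Submodule R M, P ≤ Q → φ P ≤ φ Q)
    (hφint : ∀ P Q : Submodule R M, φ (P ⊓ Q) = φ P ⊓ φ Q)
    (hδint : ∀ I J : Ideal R, δ (I ⊓ J) = δ I ⊓ δ J)
    (r : ℕ) (hr : 0 < r) (N : Fin r → Submodule R M) (s : R)
    (hprim : ∀ i, IsPhiDeltaSPrimary δ φ S s (N i))
    (hφeq : ∀ i j, φ (N i) = φ (N j))
    (hδeq : ∀ i j, δ ((N i).colon ⊤) = δ ((N j).colon ⊤)) :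
    IsPhiDeltaSPrimary δ φ S s (⨅ i, N i) := by
  obtain ⟨n, rfl⟩ := Nat.exists_eq_succ_of_ne_zero hr.ne'
  set K : Submodule R M := ⨅ i, N i with hK
  -- colon of the intersection
  have hcolon : K.colon ⊤ = ⨅ i, (N i).colon ⊤ := by
    apply le_antisymm
    · exact le_iInf fun i => colon_mono (iInf_le _ _) le_rfl
    · intro x hx
      rw [mem_colon]
      intro p _
      rw [hK, mem_iInf]
      intro i
      have := (mem_iInf _).1 hx i
      exact mem_colon.1 this p trivial
  -- δ of the colon equals δ of each colon
  have hδK : ∀ i, δ (K.colon ⊤) = δ ((N i).colon ⊤) := by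
    intro i
    rw [hcolon, aux_inf δ hδint n (fun j => (N j).colon ⊤)]
    exact le_antisymm (iInf_le _ i) (le_iInf fun j => (hδeq i j).le)
  -- φ of the intersection equals φ of each
  have hφK : ∀ i, φ K = φ (N i) := by
    intro i
    rw [hK, aux_inf φ hφint n N]
    exact le_antisymm (iInf_le _ i) (le_iInf fun j => (hφeq i j).le)
  obtain ⟨hne0, hdisj0, hsS, _⟩ := hprim 0
  refine ⟨?_, ?_, hsS, ?_⟩
  · intro htop
    exact hne0 (top_le_iff.1 (htop ▸ iInf_le _ 0))
  · rw [hδK 0]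
    exact hdisj0
  · intro a m hmem hnmem
    by_cases hsa : s * a ∈ δ (K.colon ⊤)
    · exact Or.inr hsa
    · left
      rw [hK, mem_iInf]
      intro i
      obtain ⟨_, _, _, hp⟩ := hprim i
      have h1 : a • m ∈ N i := (mem_iInf _).1 hmem i
      have h2 : a • m ∉ φ (N i) := by rw [← hφK i]; exact hnmem
      rcases hp a m h1 h2 with h | h
      · exact h
      · exact absurd ((hδK i) ▸ h) hsa
end

section
/- Let N be a φ-δ-S-primary submodule of M associated to s ∈ S, and let r ∈ R \ δ(N:_R M) be such that (φ(N) :_M r) ⊆ φ(N :_M r) and δ((N :_M r) :_R M) ∩ S = ∅. Then (N :_M r) is a φ-δ-S-primary submodule of M associated to s. -/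
open Submodule

variable {R : Type*} [CommRing R] {M : Type*} [AddCommGroup M] [Module R M]

theorem stmt3 (δ : Ideal R → Ideal R) (φ : Submodule R M → Submodule R M)
    (S : Set R) (hS1 : (1 : R) ∈ S) (hSmul : ∀ a ∈ S, ∀ b ∈ S, a * b ∈ S)
    (hδ1 : ∀ I : Ideal R, I ≤ δ I) (hδ2 : ∀ I J : Ideal R, I ≤ J → δ I ≤ δ J)
    (hφ1 : ∀ P : Submodule R M, φ P ≤ P)
    (hφ2 : ∀ P Q : Submodule R M, P ≤ Q → φ P ≤ φ Q)
    (N : Submodule R M) (s : R) (hprim : IsPhiDeltaSPrimary δ φ S s N)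
    (r : R) (hr : r ∉ δ (N.colon ⊤))
    (hcomap : Submodule.comap (r • (LinearMap.id : M →ₗ[R] M)) (φ N) ≤
      φ (Submodule.comap (r • (LinearMap.id : M →ₗ[R] M)) N))
    (hdisj : ((δ ((Submodule.comap (r • (LinearMap.id : M →ₗ[R] M)) N).colon ⊤) : Set R)
      ∩ S = ∅)) :
    IsPhiDeltaSPrimary δ φ S s (Submodule.comap (r • (LinearMap.id : M →ₗ[R] M)) N) := by
  obtain ⟨hN, hdis, hs, hp⟩ := hprim
  refine ⟨?_, hdisj, hs, ?_⟩
  · intro htop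
    apply hr
    apply hδ1
    rw [mem_colon]
    intro p _
    have : p ∈ Submodule.comap (r • (LinearMap.id : M →ₗ[R] M)) N := htop ▸ mem_top
    simpa using this
  · intro a m ham hnot
    have ham' : a • (r • m) ∈ N := by
      rw [mem_comap] at ham
      simpa [smul_comm a r m] using ham
    have hnot' : a • (r • m) ∉ φ N := by
      intro h
      apply hnot
      apply hcomap
      rw [mem_comap]
      simpa [smul_comm a r m] using h
    rcases hp a (r • m) ham' hnot' with h | h
    · left
      rw [mem_comap]
      simpa [smul_comm s r m] using h
    · right
      refine hδ2 _ _ ?_ h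
      intro x hx
      rw [mem_colon] at hx ⊢
      intro p hp'
      rw [mem_comap]
      simpa [smul_comm x r p] using hx (r • p) (mem_top (R := R))
end

section
/- Let N be a proper submodule of M with δ(N:_R M) ∩ S = ∅ and let s ∈ S. Then N is φ-δ-S-primary associated to s if and only if for every ideal I of R and every submodule K of M with IK ⊆ N and IK ⊄ φ(N), either sI ⊆ δ(N:_R M) or sK ⊆ N. -/
open Submodule

variable {R : Type*} [CommRing R] {M : Type*} [AddCommGroup M] [Module R M]

theorem stmt4 (δ : Ideal R → Ideal R) (φ : Submodule R M → Submodule R M)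
    (S : Set R) (hS1 : (1 : R) ∈ S) (hSmul : ∀ a ∈ S, ∀ b ∈ S, a * b ∈ S)
    (hδ1 : ∀ I : Ideal R, I ≤ δ I) (hδ2 : ∀ I J : Ideal R, I ≤ J → δ I ≤ δ J)
    (hφ1 : ∀ P : Submodule R M, φ P ≤ P)
    (hφ2 : ∀ P Q : Submodule R M, P ≤ Q → φ P ≤ φ Q)
    (N : Submodule R M) (hN : N ≠ ⊤)
    (hdisj : (δ (N.colon ⊤) : Set R) ∩ S = ∅) (s : R) (hs : s ∈ S) :
    (∀ (a : R) (m : M), a • m ∈ N → a • m ∉ φ N →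
        s • m ∈ N ∨ s * a ∈ δ (N.colon ⊤)) ↔
      ∀ (I : Ideal R) (K : Submodule R M), I • K ≤ N → ¬ I • K ≤ φ N →
        (∀ a ∈ I, s * a ∈ δ (N.colon ⊤)) ∨ ∀ k ∈ K, s • k ∈ N := by
  constructor
  · intro hmain I K hIK hnφ
    by_cases hI : ∀ a ∈ I, s * a ∈ δ (N.colon ⊤)
    · exact Or.inl hI
    right
    push_neg at hI
    obtain ⟨a, haI, hsa⟩ := hI
    intro k hk
    by_contra hsk
    -- witnesses b ∈ I, m ∈ K with b • m ∉ φ N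
    rw [Submodule.smul_le] at hnφ
    push_neg at hnφ
    obtain ⟨b, hbI, m, hm, hbm⟩ := hnφ
    have hak : a • k ∈ N := hIK (Submodule.smul_mem_smul haI hk)
    have ham' : a • m ∈ N := hIK (Submodule.smul_mem_smul haI hm)
    have hbmN : b • m ∈ N := hIK (Submodule.smul_mem_smul hbI hm)
    have hbkN : b • k ∈ N := hIK (Submodule.smul_mem_smul hbI hk)
    -- a • k ∈ φ N
    have hakφ : a • k ∈ φ N := by
      by_contra h
      rcases hmain a k hak h with h' | h'
      · exact hsk h'
      · exact hsa h'
    -- a • m ∈ φ N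
    have hamφ : a • m ∈ φ N := by
      by_contra h
      have hsm : s • m ∈ N := by
        rcases hmain a m ham' h with h' | h'
        · exact h'
        · exact absurd h' hsa
      have hkm : a • (k + m) ∉ φ N := by
        intro hh
        rw [smul_add] at hh
        exact h ((Submodule.add_mem_iff_right _ hakφ).mp hh)
      have hkmN : a • (k + m) ∈ N := by rw [smul_add]; exact N.add_mem hak ham'
      rcases hmain a (k + m) hkmN hkm with h' | h'
      · rw [smul_add] at h'
        exact hsk ((Submodule.add_mem_iff_left _ hsm).mp h')
      · exact hsa h'
    -- b • k ∈ φ N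
    have hbkφ : b • k ∈ φ N := by
      by_contra h
      have hsb : s * b ∈ δ (N.colon ⊤) := by
        rcases hmain b k hbkN h with h' | h'
        · exact absurd h' hsk
        · exact h'
      have habk : (a + b) • k ∉ φ N := by
        intro hh
        rw [add_smul] at hh
        exact h ((Submodule.add_mem_iff_right _ hakφ).mp hh)
      have habkN : (a + b) • k ∈ N := by rw [add_smul]; exact N.add_mem hak hbkN
      rcases hmain (a + b) k habkN habk with h' | h'
      · exact hsk h'
      · rw [mul_add] at h'
        exact hsa ((Submodule.add_mem_iff_left _ hsb).mp h')
    -- s • m ∈ N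
    have hsm : s • m ∈ N := by
      rcases hmain b m hbmN hbm with h' | h'
      · exact h'
      have habm : (a + b) • m ∉ φ N := by
        intro hh
        rw [add_smul] at hh
        exact hbm ((Submodule.add_mem_iff_right _ hamφ).mp hh)
      have habmN : (a + b) • m ∈ N := by rw [add_smul]; exact N.add_mem ham' hbmN
      rcases hmain (a + b) m habmN habm with h'' | h''
      · exact h''
      · rw [mul_add] at h''
        exact absurd ((Submodule.add_mem_iff_left _ h').mp h'') hsa
    -- final
    have hfinφ : (a + b) • (k + m) ∉ φ N := by
      intro hh
      rw [add_smul, smul_add, smul_add] at hh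
      have h2 := (φ N).sub_mem hh ((φ N).add_mem hakφ hamφ)
      have h3 := (φ N).sub_mem (by simpa using h2) hbkφ
      exact hbm (by simpa using h3)
    have hfinN : (a + b) • (k + m) ∈ N := by
      rw [add_smul, smul_add, smul_add]
      exact N.add_mem (N.add_mem hak ham') (N.add_mem hbkN hbmN)
    rcases hmain (a + b) (k + m) hfinN hfinφ with h' | h'
    · rw [smul_add] at h'
      exact hsk ((Submodule.add_mem_iff_left _ hsm).mp h')
    · have hbkm : b • (k + m) ∉ φ N := by
        intro hh
        rw [smul_add] at hh
        exact hbm ((Submodule.add_mem_iff_right _ hbkφ).mp hh)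
      have hbkmN : b • (k + m) ∈ N := by rw [smul_add]; exact N.add_mem hbkN hbmN
      rcases hmain b (k + m) hbkmN hbkm with h'' | h''
      · rw [smul_add] at h''
        exact hsk ((Submodule.add_mem_iff_left _ hsm).mp h'')
      · rw [mul_add] at h'
        exact hsa ((Submodule.add_mem_iff_left _ h'').mp h')
  · intro h a m ham hφa
    have hIK : Ideal.span {a} • Submodule.span R {m} ≤ N := by
      rw [Submodule.smul_le]
      intro r hr n hn
      rw [Ideal.mem_span_singleton'] at hr
      obtain ⟨c, rfl⟩ := hr
      rw [Submodule.mem_span_singleton] at hn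
      obtain ⟨d, rfl⟩ := hn
      have : (c * a) • d • m = (c * d) • (a • m) := by
        rw [mul_smul, mul_smul, smul_comm a d m]
      rw [this]
      exact N.smul_mem _ ham
    have hmem : a • m ∈ Ideal.span {a} • Submodule.span R {m} :=
      Submodule.smul_mem_smul (Ideal.mem_span_singleton_self a)
        (Submodule.mem_span_singleton_self m)
    have hnφ : ¬ Ideal.span {a} • Submodule.span R {m} ≤ φ N := fun hh => hφa (hh hmem)
    rcases h _ _ hIK hnφ with h' | h'
    · exact Or.inr (h' a (Ideal.mem_span_singleton_self a))
    · exact Or.inl (h' m (Submodule.mem_span_singleton_self m))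
end

section
/- Let N be a proper submodule of M with δ(N:_R M) ∩ S = ∅ and let s ∈ S. If for every a ∈ R \ (δ(N:_R M) : s), either (N :_M a) ⊆ (N :_M s) or (N :_M a) = (φ(N) :_M a), then for every ideal I of R and submodule K of M with IK ⊆ N and IK ⊄ φ(N), either sI ⊆ δ(N:_R M) or sK ⊆ N. -/
open Submodule

variable {R : Type*} [CommRing R] {M : Type*} [AddCommGroup M] [Module R M]

theorem stmt5 (δ : Ideal R → Ideal R) (φ : Submodule R M → Submodule R M)
    (S : Set R) (hS1 : (1 : R) ∈ S) (hSmul : ∀ a ∈ S, ∀ b ∈ S, a * b ∈ S)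
    (hδ1 : ∀ I : Ideal R, I ≤ δ I) (hδ2 : ∀ I J : Ideal R, I ≤ J → δ I ≤ δ J)
    (hφ1 : ∀ P : Submodule R M, φ P ≤ P)
    (hφ2 : ∀ P Q : Submodule R M, P ≤ Q → φ P ≤ φ Q)
    (N : Submodule R M) (hN : N ≠ ⊤)
    (hdisj : (δ (N.colon ⊤) : Set R) ∩ S = ∅) (s : R) (hs : s ∈ S)
    (h : ∀ a : R, a * s ∉ δ (N.colon ⊤) →
      Submodule.comap (a • (LinearMap.id : M →ₗ[R] M)) N ≤
          Submodule.comap (s • (LinearMap.id : M →ₗ[R] M)) N ∨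
        Submodule.comap (a • (LinearMap.id : M →ₗ[R] M)) N =
          Submodule.comap (a • (LinearMap.id : M →ₗ[R] M)) (φ N)) :
    ∀ (I : Ideal R) (K : Submodule R M), I • K ≤ N → ¬ I • K ≤ φ N →
      (∀ a ∈ I, s * a ∈ δ (N.colon ⊤)) ∨ ∀ k ∈ K, s • k ∈ N := by
  intro I K hIK hIKφ
  by_contra hcon
  push_neg at hcon
  obtain ⟨⟨a0, ha0I, ha0δ⟩, k0, hk0K, hk0N⟩ := hcon
  have key : ∀ a ∈ I, s * a ∉ δ (N.colon ⊤) → ∀ k ∈ K, a • k ∈ φ N := by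
    intro a haI haδ k hkK
    have hakN : a • k ∈ N := hIK (Submodule.smul_mem_smul haI hkK)
    rcases h a (by rwa [mul_comm]) with h1 | h2
    · exfalso
      apply hk0N
      have : k0 ∈ Submodule.comap (a • (LinearMap.id : M →ₗ[R] M)) N := by
        simp only [Submodule.mem_comap, LinearMap.smul_apply, LinearMap.id_apply]
        exact hIK (Submodule.smul_mem_smul haI hk0K)
      have := h1 this
      simpa using this
    · have : k ∈ Submodule.comap (a • (LinearMap.id : M →ₗ[R] M)) N := by
        simpa using hakN
      rw [h2] at this
      simpa using this
  apply hIKφ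
  apply Submodule.smul_le.2
  intro a haI k hkK
  by_cases haδ : s * a ∈ δ (N.colon ⊤)
  · have hsum : s * (a + a0) ∉ δ (N.colon ⊤) := by
      intro hmem
      apply ha0δ
      have : s * a0 = s * (a + a0) - s * a := by ring
      rw [this]
      exact Submodule.sub_mem _ hmem haδ
    have h1 := key (a + a0) (I.add_mem haI ha0I) hsum k hkK
    have h2 := key a0 ha0I ha0δ k hkK
    have : a • k = (a + a0) • k - a0 • k := by
      rw [add_smul]; abel
    rw [this]
    exact Submodule.sub_mem _ h1 h2
  · exact key a haI haδ k hkK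
end

section
/- Let N be a φ-δ-S-primary submodule of M associated to s ∈ S, and let a ∈ R with s²a ∉ δ(N:_R M). Then (N :_M sa) = (φ(N) :_M sa) or (N :_M sa) = (N :_M s). -/
open Submodule

variable {R : Type*} [CommRing R] {M : Type*} [AddCommGroup M] [Module R M]

theorem stmt6 (δ : Ideal R → Ideal R) (φ : Submodule R M → Submodule R M)
    (S : Set R) (hS1 : (1 : R) ∈ S) (hSmul : ∀ a ∈ S, ∀ b ∈ S, a * b ∈ S)
    (hδ1 : ∀ I : Ideal R, I ≤ δ I) (hδ2 : ∀ I J : Ideal R, I ≤ J → δ I ≤ δ J)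
    (hφ1 : ∀ P : Submodule R M, φ P ≤ P)
    (hφ2 : ∀ P Q : Submodule R M, P ≤ Q → φ P ≤ φ Q)
    (N : Submodule R M) (s : R) (hprim : IsPhiDeltaSPrimary δ φ S s N)
    (a : R) (ha : s * s * a ∉ δ (N.colon ⊤)) :
    Submodule.comap ((s * a) • (LinearMap.id : M →ₗ[R] M)) N =
        Submodule.comap ((s * a) • (LinearMap.id : M →ₗ[R] M)) (φ N) ∨
      Submodule.comap ((s * a) • (LinearMap.id : M →ₗ[R] M)) N =
        Submodule.comap (s • (LinearMap.id : M →ₗ[R] M)) N := by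

  obtain ⟨hN, hdis, hsS, hp⟩ := hprim
  have key : ∀ m : M, (s*a) • m ∈ N → (s*a) • m ∉ φ N → s • m ∈ N := by
    intro m h1 h2
    rcases hp (s*a) m h1 h2 with h | h
    · exact h
    · rw [← mul_assoc] at h; exact absurd h ha
  by_cases hcase : Submodule.comap ((s*a) • (LinearMap.id : M →ₗ[R] M)) N ≤
      Submodule.comap ((s*a) • (LinearMap.id : M →ₗ[R] M)) (φ N)
  · exact Or.inl (le_antisymm hcase (Submodule.comap_mono (hφ1 N)))
  · right
    obtain ⟨m0, hm0N, hm0φ⟩ := Set.not_subset.mp hcase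
    simp only [SetLike.mem_coe, Submodule.mem_comap, LinearMap.smul_apply, LinearMap.id_apply] at hm0N hm0φ
    have hsm0 : s • m0 ∈ N := key m0 hm0N hm0φ
    ext m
    simp only [Submodule.mem_comap, LinearMap.smul_apply, LinearMap.id_apply]
    constructor
    · intro hm
      by_cases hφm : (s*a) • m ∈ φ N
      · have h1 : (s*a) • (m + m0) ∈ N := by
          rw [smul_add]; exact N.add_mem hm hm0N
        have h2 : (s*a) • (m + m0) ∉ φ N := by
          rw [smul_add]; intro h
          exact hm0φ (by simpa using (φ N).sub_mem h hφm)
        have h3 := key (m + m0) h1 h2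
        rw [smul_add] at h3
        simpa using N.sub_mem h3 hsm0
      · exact key m hm hφm
    · intro hm
      rw [mul_comm, ← smul_smul]
      exact N.smul_mem a hm
end

section
/- Let N be a φ-δ-S-primary submodule of M associated to s ∈ S and K a submodule of M with K ⊄ N, δ(N :_R K) ∩ S = ∅ and φ(N ∩ K) = φ(N). Then N ∩ K is a φ-δ-S-primary submodule of the R-module K associated to s (where the colon is taken relative to K). -/
open Submodule

variable {R : Type*} [CommRing R] {M : Type*} [AddCommGroup M] [Module R M]

theorem stmt7 (δ : Ideal R → Ideal R) (φ : Submodule R M → Submodule R M)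
    (S : Set R) (hS1 : (1 : R) ∈ S) (hSmul : ∀ a ∈ S, ∀ b ∈ S, a * b ∈ S)
    (hδ1 : ∀ I : Ideal R, I ≤ δ I) (hδ2 : ∀ I J : Ideal R, I ≤ J → δ I ≤ δ J)
    (hφ1 : ∀ P : Submodule R M, φ P ≤ P)
    (hφ2 : ∀ P Q : Submodule R M, P ≤ Q → φ P ≤ φ Q)
    (N : Submodule R M) (s : R) (hprim : IsPhiDeltaSPrimary δ φ S s N)
    (K : Submodule R M) (hKN : ¬ K ≤ N)
    (hdisj : (δ (N.colon K) : Set R) ∩ S = ∅)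
    (hφcap : φ (N ⊓ K) = φ N) :
    ((δ ((N ⊓ K).colon K) : Set R) ∩ S = ∅) ∧
      ∀ (a : R) (k : M), k ∈ K → a • k ∈ N ⊓ K → a • k ∉ φ (N ⊓ K) →
        s • k ∈ N ⊓ K ∨ s * a ∈ δ ((N ⊓ K).colon K) := by
  have hcol : (N ⊓ K).colon K = N.colon K := by
    ext r
    simp only [mem_colon]
    constructor
    · exact fun h p hp => (h p hp).1
    · exact fun h p hp => ⟨h p hp, K.smul_mem r hp⟩
  constructor
  · rw [hcol]; exact hdisj
  · intro a k hk hakNK hakφ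
    obtain ⟨hakN, -⟩ := hakNK
    rw [hφcap] at hakφ
    rcases hprim.2.2.2 a k hakN hakφ with h | h
    · exact Or.inl ⟨h, K.smul_mem s hk⟩
    · right
      rw [hcol]
      refine hδ2 _ _ ?_ h
      intro r hr
      rw [mem_colon] at hr ⊢
      exact fun p _ => hr p trivial
end

section
/- Let N be a φ-δ-S-primary submodule of M associated to s ∈ S such that (N:_R M)N ⊄ φ(N). Then N is a δ-S-primary submodule of M associated to s, i.e. for all a ∈ R and m ∈ M with am ∈ N, either sa ∈ δ(N:_R M) or sm ∈ N. -/
open Submodule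

variable {R : Type*} [CommRing R] {M : Type*} [AddCommGroup M] [Module R M]

theorem stmt9 (δ : Ideal R → Ideal R) (φ : Submodule R M → Submodule R M)
    (S : Set R) (hS1 : (1 : R) ∈ S) (hSmul : ∀ a ∈ S, ∀ b ∈ S, a * b ∈ S)
    (hδ1 : ∀ I : Ideal R, I ≤ δ I) (hδ2 : ∀ I J : Ideal R, I ≤ J → δ I ≤ δ J)
    (hφ1 : ∀ P : Submodule R M, φ P ≤ P)
    (hφ2 : ∀ P Q : Submodule R M, P ≤ Q → φ P ≤ φ Q)
    (N : Submodule R M) (s : R) (hprim : IsPhiDeltaSPrimary δ φ S s N)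
    (h : ¬ (N.colon ⊤) • N ≤ φ N) :
    ∀ (a : R) (m : M), a • m ∈ N → s * a ∈ δ (N.colon ⊤) ∨ s • m ∈ N := by
  obtain ⟨hN, hδS, hsS, hmain⟩ := hprim
  intro a m ham
  by_cases hφ : a • m ∈ φ N
  · by_cases haN : ∀ n ∈ N, a • n ∈ φ N
    · by_cases hcm : ∀ r ∈ N.colon ⊤, r • m ∈ φ N
      · rw [Submodule.smul_le] at h
        push_neg at h
        obtain ⟨r, hr, n, hn, hrn⟩ := h
        have h1 : a • n ∈ N := hφ1 N (haN n hn)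
        have h2 : r • m ∈ N := hφ1 N (hcm r hr)
        have h3 : r • n ∈ N := Submodule.mem_colon.mp hr n trivial
        have key : (a + r) • (m + n) ∈ N := by
          rw [add_smul, smul_add, smul_add]
          exact N.add_mem (N.add_mem ham h1) (N.add_mem h2 h3)
        have keyφ : (a + r) • (m + n) ∉ φ N := by
          rw [add_smul, smul_add, smul_add]
          intro hmem
          apply hrn
          have : r • n = (a • m + a • n + (r • m + r • n)) - a • m - a • n - r • m := by
            abel
          rw [this]
          exact (φ N).sub_mem (((φ N).sub_mem ((φ N).sub_mem hmem hφ)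
            (haN n hn))) (hcm r hr)
        rcases hmain (a + r) (m + n) key keyφ with hsm | hsa
        · right
          have hsn : s • n ∈ N := N.smul_mem s hn
          have : s • m = s • (m + n) - s • n := by rw [smul_add]; abel
          rw [this]
          exact N.sub_mem hsm hsn
        · left
          have hsr : s * r ∈ δ (N.colon ⊤) := hδ1 _ (Ideal.mul_mem_left _ s hr)
          have : s * a = s * (a + r) - s * r := by ring
          rw [this]
          exact (δ (N.colon ⊤)).sub_mem hsa hsr
      · push_neg at hcm
        obtain ⟨r, hr, hrm⟩ := hcm
        have h2 : r • m ∈ N := Submodule.mem_colon.mp hr m trivial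
        have key : (a + r) • m ∈ N := by
          rw [add_smul]; exact N.add_mem ham h2
        have keyφ : (a + r) • m ∉ φ N := by
          rw [add_smul]
          intro hmem
          apply hrm
          have : r • m = (a • m + r • m) - a • m := by abel
          rw [this]
          exact (φ N).sub_mem hmem hφ
        rcases hmain (a + r) m key keyφ with hsm | hsa
        · right; exact hsm
        · left
          have hsr : s * r ∈ δ (N.colon ⊤) := hδ1 _ (Ideal.mul_mem_left _ s hr)
          have : s * a = s * (a + r) - s * r := by ring
          rw [this]
          exact (δ (N.colon ⊤)).sub_mem hsa hsr
    · push_neg at haN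
      obtain ⟨n, hn, han⟩ := haN
      have key : a • (m + n) ∈ N := by
        rw [smul_add]; exact N.add_mem ham (N.smul_mem a hn)
      have keyφ : a • (m + n) ∉ φ N := by
        rw [smul_add]
        intro hmem
        apply han
        have : a • n = (a • m + a • n) - a • m := by abel
        rw [this]
        exact (φ N).sub_mem hmem hφ
      rcases hmain a (m + n) key keyφ with hsm | hsa
      · right
        have hsn : s • n ∈ N := N.smul_mem s hn
        have : s • m = s • (m + n) - s • n := by rw [smul_add]; abel
        rw [this]
        exact N.sub_mem hsm hsn
      · left; exact hsa
  · exact (hmain a m ham hφ).symm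
end

section
/- Let N be a submodule of M. Then N is a φ-δ-S-primary submodule of M associated to s ∈ S if and only if N/φ(N) is a φ₀-δ-S-primary submodule of M/φ(N) associated to s, where φ₀ is the zero reduction function (φ₀(K) = 0 for all K) and one uses δ((N/φ(N)) : (M/φ(N))) = δ(N :_R M) (which holds since (N/φ(N) : M/φ(N)) = (N:_R M)). -/
open Submodule

variable {R : Type*} [CommRing R] {M : Type*} [AddCommGroup M] [Module R M]

theorem stmt10 (δ : Ideal R → Ideal R) (φ : Submodule R M → Submodule R M)
    (S : Set R) (hS1 : (1 : R) ∈ S) (hSmul : ∀ a ∈ S, ∀ b ∈ S, a * b ∈ S)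
    (hδ1 : ∀ I : Ideal R, I ≤ δ I) (hδ2 : ∀ I J : Ideal R, I ≤ J → δ I ≤ δ J)
    (hφ1 : ∀ P : Submodule R M, φ P ≤ P)
    (hφ2 : ∀ P Q : Submodule R M, P ≤ Q → φ P ≤ φ Q)
    (N : Submodule R M) (s : R) :
    IsPhiDeltaSPrimary δ φ S s N ↔
      (N.map (φ N).mkQ ≠ ⊤ ∧
        ((δ ((N.map (φ N).mkQ).colon ⊤) : Set R) ∩ S = ∅) ∧ s ∈ S ∧
        ∀ (a : R) (x : M ⧸ φ N), a • x ∈ N.map (φ N).mkQ → a • x ≠ 0 →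
          s • x ∈ N.map (φ N).mkQ ∨ s * a ∈ δ ((N.map (φ N).mkQ).colon ⊤)) := by
  have hφN := hφ1 N
  have hcm : Submodule.comap (φ N).mkQ (N.map (φ N).mkQ) = N := by
    rw [Submodule.comap_map_eq, Submodule.ker_mkQ, sup_eq_left.mpr hφN]
  have hmem : ∀ x : M, (φ N).mkQ x ∈ N.map (φ N).mkQ ↔ x ∈ N := by
    intro x
    conv_rhs => rw [← hcm]
    exact Iff.symm Submodule.mem_comap
  have hsurj := Submodule.mkQ_surjective (φ N)
  have hcolon : (N.map (φ N).mkQ).colon ⊤ = N.colon ⊤ := by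
    ext r
    simp only [Submodule.mem_colon, Submodule.mem_top, forall_true_left]
    constructor
    · intro h m
      have := h ((φ N).mkQ m)
      rw [← map_smul, hmem] at this
      exact this
    · intro h y
      obtain ⟨m, rfl⟩ := hsurj y
      rw [← map_smul, hmem]
      exact h m
  have htop : N.map (φ N).mkQ = ⊤ ↔ N = ⊤ := by
    constructor
    · intro h; rw [← hcm, h, Submodule.comap_top]
    · rintro rfl
      rw [Submodule.map_top, Submodule.range_mkQ]
  have hzero : ∀ x : M, (φ N).mkQ x = 0 ↔ x ∈ φ N := fun x =>
    Submodule.Quotient.mk_eq_zero _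
  constructor
  · rintro ⟨h1, h2, h3, h4⟩
    refine ⟨fun h => h1 (htop.mp h), by rw [hcolon]; exact h2, h3, ?_⟩
    intro a x hax hax0
    obtain ⟨m, rfl⟩ := hsurj x
    rw [← map_smul, hmem] at hax
    have h0 : a • m ∉ φ N := fun h => hax0 (by rw [← map_smul]; exact (hzero _).mpr h)
    rcases h4 a m hax h0 with h | h
    · left; rw [← map_smul]; exact (hmem _).mpr h
    · right; rw [hcolon]; exact h
  · rintro ⟨h1, h2, h3, h4⟩
    refine ⟨fun h => h1 (by rw [h, Submodule.map_top, Submodule.range_mkQ]),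
      by rw [← hcolon]; exact h2, h3, ?_⟩
    intro a m ham ham0
    have hmem' : a • ((φ N).mkQ m) ∈ N.map (φ N).mkQ := by
      rw [← map_smul]; exact (hmem _).mpr ham
    have hne : a • (φ N).mkQ m ≠ 0 := by
      rw [← map_smul]; exact fun h => ham0 ((hzero _).mp h)
    rcases h4 a ((φ N).mkQ m) hmem' hne with h | h
    · left; rw [← map_smul, hmem] at h; exact h
    · right; rw [← hcolon]; exact h
end

section
/- Let S₁ ⊆ S₂ be multiplicatively closed subsets of R such that for every s ∈ S₂ there exists t ∈ S₂ with st ∈ S₁. If N is a φ-δ-S₂-primary submodule of M associated to s ∈ S₂ and δ(N:_R M) ∩ S₁ = ∅, then N is a φ-δ-S₁-primary submodule of M associated to st ∈ S₁ (for t ∈ S₂ with st ∈ S₁). -/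
open Submodule

variable {R : Type*} [CommRing R] {M : Type*} [AddCommGroup M] [Module R M]

theorem stmt11 (δ : Ideal R → Ideal R) (φ : Submodule R M → Submodule R M)
    (S₁ S₂ : Set R) (hS₁1 : (1 : R) ∈ S₁) (hS₁mul : ∀ a ∈ S₁, ∀ b ∈ S₁, a * b ∈ S₁)
    (hS₂1 : (1 : R) ∈ S₂) (hS₂mul : ∀ a ∈ S₂, ∀ b ∈ S₂, a * b ∈ S₂)
    (hsub : S₁ ⊆ S₂) (hcomp : ∀ s ∈ S₂, ∃ t ∈ S₂, s * t ∈ S₁)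
    (hδ1 : ∀ I : Ideal R, I ≤ δ I) (hδ2 : ∀ I J : Ideal R, I ≤ J → δ I ≤ δ J)
    (hφ1 : ∀ P : Submodule R M, φ P ≤ P)
    (hφ2 : ∀ P Q : Submodule R M, P ≤ Q → φ P ≤ φ Q)
    (N : Submodule R M) (s : R) (hprim : IsPhiDeltaSPrimary δ φ S₂ s N)
    (hdisj : (δ (N.colon ⊤) : Set R) ∩ S₁ = ∅)
    (t : R) (ht : t ∈ S₂) (hst : s * t ∈ S₁) :
    IsPhiDeltaSPrimary δ φ S₁ (s * t) N := by
  obtain ⟨hne, _, hsS, hmain⟩ := hprim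
  refine ⟨hne, hdisj, hst, fun a m ham hnam => ?_⟩
  rcases hmain a m ham hnam with h | h
  · left
    rw [mul_comm, mul_smul]
    exact N.smul_mem t h
  · right
    have : t * (s * a) ∈ δ (N.colon ⊤) := Ideal.mul_mem_left _ t h
    rwa [show s * t * a = t * (s * a) by ring]
end

section
/- Let S be a m.c.s. of R and S* = {x ∈ R : x/1 is a unit of S⁻¹R}. Then S ⊆ S*, S* is multiplicatively closed, and for every x ∈ S* there exists y ∈ S* with xy ∈ S. Consequently, a proper submodule N of M with δ(N:_R M) ∩ S = ∅ is φ-δ-S-primary if and only if it is φ-δ-S*-primary (and δ(N:_R M) ∩ S* = ∅). -/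
open Submodule

variable {R : Type*} [CommRing R] {M : Type*} [AddCommGroup M] [Module R M]

private lemma aux_exists_mul_mem {R : Type*} [CommRing R] (S : Submonoid R) (x : R)
    (h : IsUnit (algebraMap R (Localization S) x)) : ∃ y, x * y ∈ S := by
  obtain ⟨z, hz⟩ := isUnit_iff_exists_inv.1 h
  obtain ⟨a, s, rfl⟩ := IsLocalization.mk'_surjective S z
  rw [IsLocalization.mul_mk'_eq_mk'_of_mul, IsLocalization.mk'_eq_iff_eq_mul, one_mul] at hz
  obtain ⟨c, hc⟩ := (IsLocalization.eq_iff_exists S (Localization S)).1 hz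
  exact ⟨a.1 * c, by rw [show x * (a.1 * c) = c * (x * a.1) by ring, hc]; exact S.mul_mem c.2 a.2.2⟩

theorem stmt12 (δ : Ideal R → Ideal R) (φ : Submodule R M → Submodule R M)
    (hδ1 : ∀ I : Ideal R, I ≤ δ I) (hδ2 : ∀ I J : Ideal R, I ≤ J → δ I ≤ δ J)
    (hφ1 : ∀ P : Submodule R M, φ P ≤ P)
    (hφ2 : ∀ P Q : Submodule R M, P ≤ Q → φ P ≤ φ Q)
    (S : Submonoid R) (N : Submodule R M) (hN : N ≠ ⊤)
    (hdisj : (δ (N.colon ⊤) : Set R) ∩ (S : Set R) = ∅) :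
    (S : Set R) ⊆ {x : R | IsUnit (algebraMap R (Localization S) x)} ∧
    (∀ x ∈ {x : R | IsUnit (algebraMap R (Localization S) x)},
      ∀ y ∈ {x : R | IsUnit (algebraMap R (Localization S) x)},
        x * y ∈ {x : R | IsUnit (algebraMap R (Localization S) x)}) ∧
    (∀ x ∈ {x : R | IsUnit (algebraMap R (Localization S) x)},
      ∃ y ∈ {x : R | IsUnit (algebraMap R (Localization S) x)}, x * y ∈ (S : Set R)) ∧
    ((δ (N.colon ⊤) : Set R) ∩ {x : R | IsUnit (algebraMap R (Localization S) x)} = ∅) ∧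
    ((∃ s ∈ (S : Set R), IsPhiDeltaSPrimary δ φ (S : Set R) s N) ↔
      ∃ s ∈ {x : R | IsUnit (algebraMap R (Localization S) x)},
        IsPhiDeltaSPrimary δ φ {x : R | IsUnit (algebraMap R (Localization S) x)} s N) := by
  have hdisj' : ∀ x, x ∈ (δ (N.colon ⊤) : Set R) → x ∉ (S : Set R) := by
    intro x hx hxS
    exact Set.eq_empty_iff_forall_notMem.1 hdisj x ⟨hx, hxS⟩
  have hSsub : (S : Set R) ⊆ {x : R | IsUnit (algebraMap R (Localization S) x)} :=
    fun x hx => IsLocalization.map_units (Localization S) ⟨x, hx⟩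
  have hinv : ∀ x ∈ {x : R | IsUnit (algebraMap R (Localization S) x)},
      ∃ y ∈ {x : R | IsUnit (algebraMap R (Localization S) x)}, x * y ∈ (S : Set R) := by
    intro x hx
    obtain ⟨y, hxy⟩ := aux_exists_mul_mem S x hx
    refine ⟨y, ?_, hxy⟩
    have hu : IsUnit (algebraMap R (Localization S) (x * y)) := hSsub hxy
    rw [map_mul] at hu
    exact isUnit_of_mul_isUnit_right hu
  have hdisjT : (δ (N.colon ⊤) : Set R) ∩ {x : R | IsUnit (algebraMap R (Localization S) x)}
      = ∅ := by
    rw [Set.eq_empty_iff_forall_notMem]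
    rintro x ⟨hxδ, hxT⟩
    obtain ⟨y, hxy⟩ := aux_exists_mul_mem S x hxT
    exact hdisj' (x * y) (Ideal.mul_mem_right y _ hxδ) hxy
  refine ⟨hSsub, fun x hx y hy => by simpa only [Set.mem_setOf_eq, map_mul] using hx.mul hy,
    hinv, hdisjT, ?_⟩
  constructor
  · rintro ⟨s, hsS, _, _, _, hmain⟩
    exact ⟨s, hSsub hsS, hN, hdisjT, hSsub hsS, hmain⟩
  · rintro ⟨s, hsT, _, _, _, hmain⟩
    obtain ⟨y, hyT, hsyS⟩ := hinv s hsT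
    refine ⟨s * y, hsyS, hN, hdisj, hsyS, fun a m h1 h2 => ?_⟩
    rcases hmain a m h1 h2 with h | h
    · left
      rw [show (s * y) • m = y • (s • m) by rw [smul_smul]; ring_nf]
      exact N.smul_mem y h
    · right
      rw [show s * y * a = y * (s * a) by ring]
      exact Ideal.mul_mem_left _ y h
end

section
/- Let N be a φ-δ-S-primary submodule of a finitely generated R-module M associated to s ∈ S, and suppose the localized functions satisfy S⁻¹φ(K) = φ_S(S⁻¹K) for all submodules K of M and S⁻¹δ(I) = δ_S(S⁻¹I) for all ideals I of R. Then S⁻¹N is a φ_S-δ_S-S-primary submodule of the S⁻¹R-module S⁻¹M associated to s/1, i.e. δ_S(S⁻¹N : S⁻¹M) ∩ {s/1 : s ∈ S} = ∅ and whenever (a/t₁)(m/t₂) ∈ S⁻¹N \ φ_S(S⁻¹N), then (s/1)(m/t₂) ∈ S⁻¹N or (s/1)(a/t₁) ∈ δ_S(S⁻¹N : S⁻¹M). -/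
open Submodule

variable {R : Type*} [CommRing R] {M : Type*} [AddCommGroup M] [Module R M]

lemma mem_localized_mk_iff (S : Submonoid R) (N : Submodule R M) (m : M) (t : S) :
    LocalizedModule.mk m t ∈ N.localized S ↔ ∃ u : S, u • m ∈ N := by
  constructor
  · rintro ⟨n, hn, u, h⟩
    rw [← IsLocalizedModule.mk_eq_mk', LocalizedModule.mk_eq] at h
    obtain ⟨c, hc⟩ := h
    refine ⟨c * u, ?_⟩
    have : (c * u) • m = c • u • m := mul_smul c u m
    rw [this, ← hc]
    exact N.smul_mem _ (N.smul_mem _ hn)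
  · rintro ⟨u, hu⟩
    refine ⟨u • m, hu, u * t, ?_⟩
    rw [← IsLocalizedModule.mk_eq_mk', LocalizedModule.mk_eq]
    refine ⟨1, ?_⟩
    simp only [one_smul, Submonoid.smul_def, Submonoid.coe_mul]
    rw [← mul_smul, mul_comm]

lemma colon_localized (S : Submonoid R) [Module.Finite R M] (N : Submodule R M) :
    (N.localized S).colon ⊤ = (N.colon ⊤).map (algebraMap R (Localization S)) := by
  apply le_antisymm
  · intro x hx
    obtain ⟨⟨a, t⟩, rfl⟩ := IsLocalization.mk'_surjective S x
    dsimp only at hx ⊢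
    rw [IsLocalization.mk'_mem_map_algebraMap_iff S]
    obtain ⟨T, hT⟩ := Module.Finite.fg_top (R := R) (M := M)
    have key : ∀ i : M, ∃ w : S, i ∈ T → ((w : R) * a) • i ∈ N := by
      intro i
      by_cases hi : i ∈ T
      · have h1 : IsLocalization.mk' (Localization S) a t • LocalizedModule.mk i 1
            ∈ N.localized S := Submodule.mem_colon.mp hx _ trivial
        rw [← Localization.mk_eq_mk'_apply, LocalizedModule.mk_smul_mk, mem_localized_mk_iff] at h1
        obtain ⟨u, hu⟩ := h1
        rw [Submonoid.smul_def, ← mul_smul] at hu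
        exact ⟨u, fun _ => hu⟩
      · exact ⟨1, fun h => absurd h hi⟩
    classical
    choose w hw using key
    set W : S := T.prod w with hW
    refine ⟨W, W.2, ?_⟩
    rw [Submodule.mem_colon]
    intro p _
    have hp : p ∈ span R (T : Set M) := by rw [hT]; trivial
    have hle : span R (T : Set M) ≤ Submodule.comap
        (((W : R) * a) • (LinearMap.id : M →ₗ[R] M)) N := by
      rw [span_le]
      intro i hi
      simp only [SetLike.mem_coe, Submodule.mem_comap, LinearMap.smul_apply, LinearMap.id_coe,
        id_eq]
      have h2 : W = w i * (T.erase i).prod w := by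
        rw [hW, Finset.mul_prod_erase T w hi]
      have h3 : ((W : R) * a) • i
          = ((((T.erase i).prod w : S) : R)) • (((w i : R) * a) • i) := by
        rw [← mul_smul]
        congr 1
        rw [h2, Submonoid.coe_mul]
        ring
      rw [h3]
      exact N.smul_mem _ (hw i hi)
    have := hle hp
    simpa using this
  · rw [Ideal.map_le_iff_le_comap]
    intro r hr
    simp only [Ideal.mem_comap]
    rw [Submodule.mem_colon]
    intro p _
    induction p using LocalizedModule.induction_on with
    | h m u =>
      have : algebraMap R (Localization S) r = IsLocalization.mk' (Localization S) r (1 : S) := by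
        rw [IsLocalization.mk'_one]
      rw [this, ← Localization.mk_eq_mk'_apply, LocalizedModule.mk_smul_mk, mem_localized_mk_iff]
      exact ⟨1, by simpa using N.smul_mem (1 : R) (Submodule.mem_colon.mp hr m trivial)⟩


theorem stmt13 (δ : Ideal R → Ideal R) (φ : Submodule R M → Submodule R M)
    (hδ1 : ∀ I : Ideal R, I ≤ δ I) (hδ2 : ∀ I J : Ideal R, I ≤ J → δ I ≤ δ J)
    (hφ1 : ∀ P : Submodule R M, φ P ≤ P)
    (hφ2 : ∀ P Q : Submodule R M, P ≤ Q → φ P ≤ φ Q)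
    [Module.Finite R M] (S : Submonoid R)
    (δS : Ideal (Localization S) → Ideal (Localization S))
    (φS : Submodule (Localization S) (LocalizedModule S M) →
      Submodule (Localization S) (LocalizedModule S M))
    (hδS1 : ∀ I, I ≤ δS I) (hδS2 : ∀ I J, I ≤ J → δS I ≤ δS J)
    (hφS1 : ∀ P, φS P ≤ P) (hφS2 : ∀ P Q, P ≤ Q → φS P ≤ φS Q)
    (hφloc : ∀ K : Submodule R M, (φ K).localized S = φS (K.localized S))
    (hδloc : ∀ I : Ideal R,
      (δ I).map (algebraMap R (Localization S)) = δS (I.map (algebraMap R (Localization S))))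
    (N : Submodule R M) (s : R) (hs : s ∈ S)
    (hprim : IsPhiDeltaSPrimary δ φ (S : Set R) s N) :
    ((δS ((N.localized S).colon ⊤) : Set (Localization S)) ∩
        {x | ∃ t ∈ S, algebraMap R (Localization S) t = x} = ∅) ∧
      ∀ (a : Localization S) (m : LocalizedModule S M),
        a • m ∈ N.localized S → a • m ∉ φS (N.localized S) →
          (algebraMap R (Localization S) s) • m ∈ N.localized S ∨
            algebraMap R (Localization S) s * a ∈ δS ((N.localized S).colon ⊤) := by
  obtain ⟨hNtop, hempty, hsS, hp⟩ := hprim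
  have hcolon : δS ((N.localized S).colon ⊤)
      = (δ (N.colon ⊤)).map (algebraMap R (Localization S)) := by
    rw [colon_localized S N, ← hδloc]
  constructor
  · rw [Set.eq_empty_iff_forall_notMem]
    rintro x ⟨hx1, t, htS, rfl⟩
    rw [hcolon] at hx1
    have : algebraMap R (Localization S) t
        = IsLocalization.mk' (Localization S) t (1 : S) := (IsLocalization.mk'_one _ _).symm
    rw [SetLike.mem_coe, this, IsLocalization.mk'_mem_map_algebraMap_iff S] at hx1
    obtain ⟨u, huS, hu⟩ := hx1
    have : u * t ∈ (δ (N.colon ⊤) : Set R) ∩ (S : Set R) :=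
      ⟨hu, S.mul_mem huS htS⟩
    rw [hempty] at this
    exact this
  · intro a m ham hamφ
    obtain ⟨⟨a₀, t₁⟩, rfl⟩ := IsLocalization.mk'_surjective S a
    dsimp only at ham hamφ ⊢
    induction m using LocalizedModule.induction_on with
    | h m₀ t₂ =>
      rw [← Localization.mk_eq_mk'_apply, LocalizedModule.mk_smul_mk, mem_localized_mk_iff] at ham
      obtain ⟨u, hu⟩ := ham
      rw [Submonoid.smul_def, ← mul_smul] at hu
      have hnotφ : ((u : R) * a₀) • m₀ ∉ φ N := by
        intro hmem
        apply hamφ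
        rw [← hφloc]
        rw [← Localization.mk_eq_mk'_apply, LocalizedModule.mk_smul_mk, mem_localized_mk_iff]
        exact ⟨u, by rwa [Submonoid.smul_def, ← mul_smul]⟩
      rcases hp ((u : R) * a₀) m₀ hu hnotφ with h | h
      · left
        have : algebraMap R (Localization S) s
            = IsLocalization.mk' (Localization S) s (1 : S) := (IsLocalization.mk'_one _ _).symm
        rw [this, ← Localization.mk_eq_mk'_apply, LocalizedModule.mk_smul_mk, mem_localized_mk_iff]
        exact ⟨1, by simpa using N.smul_mem (1 : R) h⟩
      · right
        rw [hcolon]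
        have heq : algebraMap R (Localization S) s * IsLocalization.mk' (Localization S) a₀ t₁
            = IsLocalization.mk' (Localization S) (s * a₀) t₁ := by
          exact IsLocalization.mul_mk'_eq_mk'_of_mul s a₀ t₁
        rw [heq, IsLocalization.mk'_mem_map_algebraMap_iff S]
        refine ⟨u, u.2, ?_⟩
        have : (u : R) * (s * a₀) = s * ((u : R) * a₀) := by ring
        rw [this]
        exact h
end

section
/- Let f : M → M' be a surjective R-module homomorphism satisfying φ(f⁻¹(K')) = f⁻¹(φ'(K')) for all submodules K' of M', and let N be a proper submodule of M containing ker f. Then N is a φ-δ-S-primary submodule of M associated to s ∈ S if and only if f(N) is a φ'-δ-S-primary submodule of M' associated to s. -/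
open Submodule

variable {R : Type*} [CommRing R] {M : Type*} [AddCommGroup M] [Module R M]

theorem stmt15 {M' : Type*} [AddCommGroup M'] [Module R M']
    (δ : Ideal R → Ideal R) (φ : Submodule R M → Submodule R M)
    (φ' : Submodule R M' → Submodule R M')
    (S : Set R) (hS1 : (1 : R) ∈ S) (hSmul : ∀ a ∈ S, ∀ b ∈ S, a * b ∈ S)
    (hδ1 : ∀ I : Ideal R, I ≤ δ I) (hδ2 : ∀ I J : Ideal R, I ≤ J → δ I ≤ δ J)
    (hφ1 : ∀ P : Submodule R M, φ P ≤ P)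
    (hφ2 : ∀ P Q : Submodule R M, P ≤ Q → φ P ≤ φ Q)
    (hφ'1 : ∀ P : Submodule R M', φ' P ≤ P)
    (hφ'2 : ∀ P Q : Submodule R M', P ≤ Q → φ' P ≤ φ' Q)
    (f : M →ₗ[R] M') (hf : Function.Surjective f)
    (hcompat : ∀ K' : Submodule R M', φ (K'.comap f) = (φ' K').comap f)
    (N : Submodule R M) (hN : N ≠ ⊤) (hker : LinearMap.ker f ≤ N) (s : R) :
    IsPhiDeltaSPrimary δ φ S s N ↔ IsPhiDeltaSPrimary δ φ' S s (N.map f) := by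
  have hcm : (N.map f).comap f = N := by
    rw [Submodule.comap_map_eq, sup_eq_left.2 hker]
  have hmem : ∀ x : M, f x ∈ N.map f ↔ x ∈ N := by
    intro x
    constructor
    · intro h
      exact hcm ▸ (Submodule.mem_comap.2 h)
    · exact fun h => Submodule.mem_map_of_mem h
  have hcolon : N.colon ⊤ = (N.map f).colon ⊤ := by
    ext r
    simp only [Submodule.mem_colon]
    constructor
    · intro h p _
      obtain ⟨m, rfl⟩ := hf p
      rw [← map_smul, hmem]
      exact h m trivial
    · intro h m _
      rw [← hmem, map_smul]
      exact h (f m) trivial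
  have hphi : φ N = (φ' (N.map f)).comap f := by
    rw [← hcompat, hcm]
  have hmemphi : ∀ x : M, f x ∈ φ' (N.map f) ↔ x ∈ φ N := by
    intro x; rw [hphi]; exact Submodule.mem_comap.symm
  have hNtop : N.map f ≠ ⊤ := by
    intro h
    apply hN
    rw [← hcm, h, Submodule.comap_top]
  constructor
  · rintro ⟨-, h2, h3, h4⟩
    refine ⟨hNtop, by rwa [← hcolon], h3, ?_⟩
    intro a m' hmN hmφ
    obtain ⟨m, rfl⟩ := hf m'
    rw [← map_smul, hmem] at hmN
    rw [← map_smul, hmemphi] at hmφ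
    rcases h4 a m hmN hmφ with h | h
    · left; rw [← map_smul, hmem]; exact h
    · right; rwa [← hcolon]
  · rintro ⟨-, h2, h3, h4⟩
    refine ⟨hN, by rwa [hcolon], h3, ?_⟩
    intro a m hmN hmφ
    rw [← hmem, map_smul] at hmN
    rw [← hmemphi, map_smul] at hmφ
    rcases h4 a (f m) hmN hmφ with h | h
    · left; rwa [← map_smul, hmem] at h
    · right; rwa [hcolon]
end

section
/- Let f : M → M' be a surjective R-module homomorphism with φ(f⁻¹(K')) = f⁻¹(φ'(K')) for all submodules K' of M'. If N' is a φ'-δ-S-primary submodule of M' associated to s ∈ S, then f⁻¹(N') is a φ-δ-S-primary submodule of M associated to s. -/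
open Submodule

variable {R : Type*} [CommRing R] {M : Type*} [AddCommGroup M] [Module R M]

theorem stmt16 {M' : Type*} [AddCommGroup M'] [Module R M']
    (δ : Ideal R → Ideal R) (φ : Submodule R M → Submodule R M)
    (φ' : Submodule R M' → Submodule R M')
    (S : Set R) (hS1 : (1 : R) ∈ S) (hSmul : ∀ a ∈ S, ∀ b ∈ S, a * b ∈ S)
    (hδ1 : ∀ I : Ideal R, I ≤ δ I) (hδ2 : ∀ I J : Ideal R, I ≤ J → δ I ≤ δ J)
    (hφ1 : ∀ P : Submodule R M, φ P ≤ P)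
    (hφ2 : ∀ P Q : Submodule R M, P ≤ Q → φ P ≤ φ Q)
    (hφ'1 : ∀ P : Submodule R M', φ' P ≤ P)
    (hφ'2 : ∀ P Q : Submodule R M', P ≤ Q → φ' P ≤ φ' Q)
    (f : M →ₗ[R] M') (hf : Function.Surjective f)
    (hcompat : ∀ K' : Submodule R M', φ (K'.comap f) = (φ' K').comap f)
    (N' : Submodule R M') (s : R)
    (hprim : IsPhiDeltaSPrimary δ φ' S s N') :
    IsPhiDeltaSPrimary δ φ S s (N'.comap f) := by
  obtain ⟨hne, hdis, hsS, hmain⟩ := hprim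
  have hcol : (N'.comap f).colon ⊤ = N'.colon ⊤ := by
    ext r
    simp only [Submodule.mem_colon, Submodule.mem_top, forall_true_left, Submodule.mem_comap,
      map_smul, true_implies]
    constructor
    · intro h m'
      obtain ⟨m, rfl⟩ := hf m'
      exact h m
    · intro h m
      exact h (f m)
  refine ⟨?_, by rw [hcol]; exact hdis, hsS, ?_⟩
  · intro htop
    apply hne
    rw [eq_top_iff]
    intro m' _
    obtain ⟨m, rfl⟩ := hf m'
    have : m ∈ N'.comap f := by rw [htop]; trivial
    exact this
  · intro a m hmem hnot
    rw [hcompat N'] at hnot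
    have h1 : a • f m ∈ N' := by
      have := hmem
      rw [Submodule.mem_comap, map_smul] at this
      exact this
    have h2 : a • f m ∉ φ' N' := by
      intro hc
      apply hnot
      rw [Submodule.mem_comap, map_smul]
      exact hc
    rcases hmain a (f m) h1 h2 with h | h
    · left; rw [Submodule.mem_comap, map_smul]; exact h
    · right; rw [hcol]; exact h
end

section
/- Let N be a φ-δ-S-primary submodule of M associated to s ∈ S. Then N is φ-δ-S-free twin zero if and only if for every ideal I of R and every submodule K of M with IK ⊆ N and IK ⊄ φ(N), either sK ⊆ N or sI ⊆ δ(N:_R M). -/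
open Submodule

variable {R : Type*} [CommRing R] {M : Type*} [AddCommGroup M] [Module R M]

theorem stmt17 (δ : Ideal R → Ideal R) (φ : Submodule R M → Submodule R M)
    (S : Set R) (hS1 : (1 : R) ∈ S) (hSmul : ∀ a ∈ S, ∀ b ∈ S, a * b ∈ S)
    (hδ1 : ∀ I : Ideal R, I ≤ δ I) (hδ2 : ∀ I J : Ideal R, I ≤ J → δ I ≤ δ J)
    (hφ1 : ∀ P : Submodule R M, φ P ≤ P)
    (hφ2 : ∀ P Q : Submodule R M, P ≤ Q → φ P ≤ φ Q)
    (N : Submodule R M) (s : R) (hprim : IsPhiDeltaSPrimary δ φ S s N) :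
    (∀ (I : Ideal R) (K : Submodule R M), I • K ≤ N → ¬ I • K ≤ φ N →
        ∀ a ∈ I, ∀ k ∈ K,
          ¬ (a • k ∈ φ N ∧ s • k ∉ N ∧ s * a ∉ δ (N.colon ⊤))) ↔
      ∀ (I : Ideal R) (K : Submodule R M), I • K ≤ N → ¬ I • K ≤ φ N →
        (∀ k ∈ K, s • k ∈ N) ∨ ∀ a ∈ I, s * a ∈ δ (N.colon ⊤) := by
  constructor
  · intro hfree I K h1 h2
    by_contra hcon
    push_neg at hcon
    obtain ⟨⟨k, hk, hsk⟩, a, ha, hsa⟩ := hcon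
    have hak : a • k ∈ N := h1 (Submodule.smul_mem_smul ha hk)
    by_cases hφ : a • k ∈ φ N
    · exact hfree I K h1 h2 a ha k hk ⟨hφ, hsk, hsa⟩
    · rcases hprim.2.2.2 a k hak hφ with h | h
      · exact hsk h
      · exact hsa h
  · intro h I K h1 h2 a ha k hk ⟨_, hsk, hsa⟩
    rcases h I K h1 h2 with h' | h'
    · exact hsk (h' k hk)
    · exact hsa (h' a ha)
end
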